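/- Let A, X, Y, Z be jointly distributed finite discrete random variables with P(a,x,y,z) = P(y|a,z)·P(z|a,x)·P(x)·P(a) (the instrumental causal structure). Then the observed marginal distribution of (X,Y,Z) satisfies I(X:Y,Z) ≤ H(Z). -/

import Mathlib

open Finset

/-- Probability that the random variable `X` takes value `x`, for weights `μ`. -/
noncomputable def prob {Ω α : Type} [Fintype Ω] [Fintype α] [DecidableEq α]
    (μ : Ω → ℝ) (X : Ω → α) (x : α) : ℝ :=
  ∑ ω, if X ω = x then μ ω else 0

/-- Shannon entropy (base 2) of a finite discrete random variable,
with the convention `0 * log₂ 0 = 0` (since `Real.logb 2 0 = 0`). -/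
noncomputable def ent {Ω α : Type} [Fintype Ω] [Fintype α] [DecidableEq α]
    (μ : Ω → ℝ) (X : Ω → α) : ℝ :=
  -∑ x, prob μ X x * Real.logb 2 (prob μ X x)

/-- `μ` is a probability mass function on the finite sample space `Ω`. -/
def IsPMF {Ω : Type} [Fintype Ω] (μ : Ω → ℝ) : Prop :=
  (∀ ω, 0 ≤ μ ω) ∧ ∑ ω, μ ω = 1

/-- Mutual information `I(X:Y) = H(X) + H(Y) - H(X,Y)`. -/
noncomputable def mutualInfo {Ω α β : Type} [Fintype Ω] [Fintype α] [Fintype β]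
    [DecidableEq α] [DecidableEq β] (μ : Ω → ℝ) (X : Ω → α) (Y : Ω → β) : ℝ :=
  ent μ X + ent μ Y - ent μ (fun ω => (X ω, Y ω))

/-- Conditional mutual information
`I(X:Y|Z) = H(X,Z) + H(Y,Z) - H(Z) - H(X,Y,Z)`. -/
noncomputable def condMutualInfo {Ω α β γ : Type} [Fintype Ω] [Fintype α] [Fintype β]
    [Fintype γ] [DecidableEq α] [DecidableEq β] [DecidableEq γ]
    (μ : Ω → ℝ) (X : Ω → α) (Y : Ω → β) (Z : Ω → γ) : ℝ :=
  ent μ (fun ω => (X ω, Z ω)) + ent μ (fun ω => (Y ω, Z ω)) - ent μ Z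
    - ent μ (fun ω => (X ω, Y ω, Z ω))

/-- Conditional entropy `H(X|Y) = H(X,Y) - H(Y)`. -/
noncomputable def condEnt {Ω α β : Type} [Fintype Ω] [Fintype α] [Fintype β]
    [DecidableEq α] [DecidableEq β] (μ : Ω → ℝ) (X : Ω → α) (Y : Ω → β) : ℝ :=
  ent μ (fun ω => (X ω, Y ω)) - ent μ Y

/-! Since `Y` depends on `X` only through `(Z, A)`, `I(X : Y | Z, A) = 0`, and the input `X` is
independent of the latent `A`. By the chain rule,
`I(X : Y, Z) ≤ I(X : A, Y, Z) = I(X : Z, A) = I(X : A) + I(X : Z | A) = I(X : Z | A) ≤ H(Z | A) ≤ H(Z)`.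
Nonnegativity of conditional mutual information is Gibbs' inequality; the unconditional
quantities are the conditional ones given a constant. -/

open Real Function

lemma sub_le_mul_log_sub_log {p q : ℝ} (hp : 0 < p) (hq : 0 < q) :
    p - q ≤ p * (log p - log q) := by
  have := one_sub_inv_le_log_of_pos (div_pos hp hq)
  rw [log_div hp.ne' hq.ne', inv_div] at this
  have := mul_le_mul_of_nonneg_left this hp.le
  rwa [mul_sub, mul_one, mul_div_cancel₀ _ hp.ne'] at this

lemma sum_mul_logb_sub_logb_nonneg {ι : Type} [Fintype ι] {p q : ι → ℝ}
    (hp : ∀ i, 0 ≤ p i) (hq : ∀ i, 0 ≤ q i) (hpq : ∀ i, 0 < p i → 0 < q i)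
    (hsum : ∑ i, q i ≤ ∑ i, p i) :
    0 ≤ ∑ i, p i * (logb 2 (p i) - logb 2 (q i)) := by
  have hlog2 : 0 < log 2 := log_pos one_lt_two
  have key : ∀ i, (p i - q i) / log 2 ≤ p i * (logb 2 (p i) - logb 2 (q i)) := by
    intro i
    rcases (hp i).eq_or_lt with h | h
    · rw [← h, zero_mul, zero_sub, neg_div, neg_nonpos]
      exact div_nonneg (hq i) hlog2.le
    · rw [logb, logb, ← sub_div, ← mul_div_assoc]
      gcongr
      exact sub_le_mul_log_sub_log h (hpq i h)
  calc 0 ≤ (∑ i, p i - ∑ i, q i) / log 2 := div_nonneg (by linarith) hlog2.le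
    _ = ∑ i, (p i - q i) / log 2 := by rw [← sum_sub_distrib, sum_div]
    _ ≤ _ := sum_le_sum fun i _ => key i

section Entropy

variable {Ω α β γ : Type} [Fintype Ω] [Fintype α] [Fintype β] [Fintype γ]
  [DecidableEq α] [DecidableEq β] [DecidableEq γ] {μ : Ω → ℝ}

lemma prob_nonneg (hμ : ∀ ω, 0 ≤ μ ω) (X : Ω → α) (a : α) : 0 ≤ prob μ X a :=
  sum_nonneg fun ω _ => by split_ifs <;> simp [hμ ω]

lemma sum_prob (X : Ω → α) : ∑ a, prob μ X a = ∑ ω, μ ω := by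
  simp only [prob]
  rw [sum_comm]
  simp

lemma prob_comp (X : Ω → α) (f : α → β) (b : β) :
    prob μ (fun ω => f (X ω)) b = ∑ a, if f a = b then prob μ X a else 0 := by
  simp only [prob]
  calc ∑ ω, (if f (X ω) = b then μ ω else 0)
      = ∑ ω, ∑ a, if X ω = a then (if f a = b then μ ω else 0) else 0 := by simp
    _ = _ := by
      rw [sum_comm]
      refine sum_congr rfl fun a _ => ?_
      split_ifs <;> simp [*]

lemma sum_prob_prod_left (X : Ω → α) (Y : Ω → β) (b : β) :
    ∑ a, prob μ (fun ω => (X ω, Y ω)) (a, b) = prob μ Y b := by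
  simp only [prob, Prod.mk.injEq]
  rw [sum_comm]
  simp [ite_and]

lemma sum_prob_prod_right (X : Ω → α) (Y : Ω → β) (a : α) :
    ∑ b, prob μ (fun ω => (X ω, Y ω)) (a, b) = prob μ X a := by
  simp only [prob, Prod.mk.injEq]
  rw [sum_comm]
  simp [ite_and]

lemma sum_prob_prod_mid (X : Ω → α) (Y : Ω → β) (Z : Ω → γ) (a : α) (c : γ) :
    ∑ b, prob μ (fun ω => (X ω, Y ω, Z ω)) (a, b, c) = prob μ (fun ω => (X ω, Z ω)) (a, c) := by
  simp only [prob, Prod.mk.injEq]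
  rw [sum_comm]
  simp [ite_and]

lemma prob_comp_of_injective (X : Ω → α) {f : α → β} (hf : Injective f) (a : α) :
    prob μ (fun ω => f (X ω)) (f a) = prob μ X a := by
  simp [prob_comp, hf.eq_iff]

lemma prob_le_prob_comp (hμ : ∀ ω, 0 ≤ μ ω) (X : Ω → α) (f : α → β) (a : α) :
    prob μ X a ≤ prob μ (fun ω => f (X ω)) (f a) := by
  rw [prob_comp X f]
  refine le_trans (by simp) (single_le_sum (fun a' _ => ?_) (mem_univ a))
  split_ifs <;> simp [prob_nonneg hμ]

lemma ent_comp_eq_sum (X : Ω → α) (f : α → β) :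
    ent μ (fun ω => f (X ω)) = -∑ a, prob μ X a * logb 2 (prob μ (fun ω => f (X ω)) (f a)) := by
  rw [ent, neg_inj]
  calc ∑ b, prob μ (fun ω => f (X ω)) b * logb 2 (prob μ (fun ω => f (X ω)) b)
      = ∑ b, ∑ a, if f a = b then
          prob μ X a * logb 2 (prob μ (fun ω => f (X ω)) (f a)) else 0 := by
        refine sum_congr rfl fun b _ => ?_
        nth_rw 1 [prob_comp, sum_mul]
        refine sum_congr rfl fun a _ => ?_
        split_ifs with h
        · rw [h]
        · simp
    _ = _ := by
      rw [sum_comm]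
      simp

lemma ent_comp_of_injective (X : Ω → α) {f : α → β} (hf : Injective f) :
    ent μ (fun ω => f (X ω)) = ent μ X := by
  rw [ent_comp_eq_sum]
  simp only [prob_comp_of_injective X hf, ent]

lemma ent_comp_le (hμ : ∀ ω, 0 ≤ μ ω) (X : Ω → α) (f : α → β) :
    ent μ (fun ω => f (X ω)) ≤ ent μ X := by
  rw [ent_comp_eq_sum, ent, neg_le_neg_iff]
  refine sum_le_sum fun a _ => ?_
  rcases (prob_nonneg hμ X a).eq_or_lt with h | h
  · simp [← h]
  · gcongr
    exacts [one_lt_two, prob_le_prob_comp hμ X f a]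

lemma prob_comp_pos (hμ : ∀ ω, 0 ≤ μ ω) (X : Ω → α) (f : α → β) {a : α}
    (ha : 0 < prob μ X a) : 0 < prob μ (fun ω => f (X ω)) (f a) :=
  ha.trans_le (prob_le_prob_comp hμ X f a)

lemma prob_marginals_pos (hμ : ∀ ω, 0 ≤ μ ω) (X : Ω → α) (Y : Ω → β) (Z : Ω → γ)
    {w : α × β × γ} (hw : 0 < prob μ (fun ω => (X ω, Y ω, Z ω)) w) :
    0 < prob μ (fun ω => (X ω, Z ω)) (w.1, w.2.2) ∧
      0 < prob μ (fun ω => (Y ω, Z ω)) (w.2.1, w.2.2) ∧ 0 < prob μ Z w.2.2 :=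
  ⟨prob_comp_pos hμ _ (fun w => (w.1, w.2.2)) hw, prob_comp_pos hμ _ (fun w => (w.2.1, w.2.2)) hw,
    prob_comp_pos hμ _ (fun w => w.2.2) hw⟩

lemma condMutualInfo_eq_sum (hμ : ∀ ω, 0 ≤ μ ω) (X : Ω → α) (Y : Ω → β) (Z : Ω → γ) :
    condMutualInfo μ X Y Z = ∑ w : α × β × γ, prob μ (fun ω => (X ω, Y ω, Z ω)) w *
      (logb 2 (prob μ (fun ω => (X ω, Y ω, Z ω)) w)
        - logb 2 (prob μ (fun ω => (X ω, Z ω)) (w.1, w.2.2)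
          * prob μ (fun ω => (Y ω, Z ω)) (w.2.1, w.2.2) / prob μ Z w.2.2)) := by
  set J := fun ω => (X ω, Y ω, Z ω)
  have hentXZ : ent μ (fun ω => (X ω, Z ω)) =
      -∑ w, prob μ J w * logb 2 (prob μ (fun ω => (X ω, Z ω)) (w.1, w.2.2)) :=
    ent_comp_eq_sum J (fun w => (w.1, w.2.2))
  have hentYZ : ent μ (fun ω => (Y ω, Z ω)) =
      -∑ w, prob μ J w * logb 2 (prob μ (fun ω => (Y ω, Z ω)) (w.2.1, w.2.2)) :=
    ent_comp_eq_sum J (fun w => (w.2.1, w.2.2))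
  have hentZ : ent μ Z = -∑ w, prob μ J w * logb 2 (prob μ Z w.2.2) :=
    ent_comp_eq_sum J (fun w => w.2.2)
  have hsplit : ∀ w, prob μ J w * logb 2 (prob μ (fun ω => (X ω, Z ω)) (w.1, w.2.2)
        * prob μ (fun ω => (Y ω, Z ω)) (w.2.1, w.2.2) / prob μ Z w.2.2)
      = prob μ J w * (logb 2 (prob μ (fun ω => (X ω, Z ω)) (w.1, w.2.2))
        + logb 2 (prob μ (fun ω => (Y ω, Z ω)) (w.2.1, w.2.2)) - logb 2 (prob μ Z w.2.2)) := by
    intro w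
    rcases (prob_nonneg hμ J w).eq_or_lt with h | h
    · simp [← h]
    · obtain ⟨hXZ, hYZ, hZ⟩ := prob_marginals_pos hμ X Y Z h
      rw [logb_div (mul_pos hXZ hYZ).ne' hZ.ne', logb_mul hXZ.ne' hYZ.ne']
  simp only [mul_sub, sum_sub_distrib, hsplit, mul_add, sum_add_distrib]
  rw [condMutualInfo, hentXZ, hentYZ, hentZ, ent]
  ring

lemma condMutualInfo_nonneg (hμ : ∀ ω, 0 ≤ μ ω) (X : Ω → α) (Y : Ω → β) (Z : Ω → γ) :
    0 ≤ condMutualInfo μ X Y Z := by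
  rw [condMutualInfo_eq_sum hμ]
  refine sum_mul_logb_sub_logb_nonneg (prob_nonneg hμ _) (fun w => ?_) (fun w hw => ?_)
    (le_of_eq ?_)
  · exact div_nonneg (mul_nonneg (prob_nonneg hμ _ _) (prob_nonneg hμ _ _)) (prob_nonneg hμ _ _)
  · obtain ⟨hXZ, hYZ, hZ⟩ := prob_marginals_pos hμ X Y Z hw
    exact div_pos (mul_pos hXZ hYZ) hZ
  · calc ∑ w : α × β × γ, prob μ (fun ω => (X ω, Z ω)) (w.1, w.2.2)
            * prob μ (fun ω => (Y ω, Z ω)) (w.2.1, w.2.2) / prob μ Z w.2.2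
        = ∑ a, ∑ c, ∑ b, prob μ (fun ω => (X ω, Z ω)) (a, c)
            * prob μ (fun ω => (Y ω, Z ω)) (b, c) / prob μ Z c := by
          simp only [Fintype.sum_prod_type]
          exact sum_congr rfl fun a _ => sum_comm
      _ = ∑ c, (∑ a, prob μ (fun ω => (X ω, Z ω)) (a, c))
            * (∑ b, prob μ (fun ω => (Y ω, Z ω)) (b, c)) / prob μ Z c := by
          rw [sum_comm]
          simp only [sum_mul_sum, sum_div]
      _ = ∑ c, prob μ Z c := by simp only [sum_prob_prod_left, mul_self_div_self]
      _ = _ := by rw [sum_prob, sum_prob]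

lemma condMutualInfo_eq_zero_of_prob_eq_mul (hμ : ∀ ω, 0 ≤ μ ω) (X : Ω → α) (Y : Ω → β)
    (Z : Ω → γ) (f : β → γ → ℝ) (g : α → γ → ℝ)
    (h : ∀ a b c, prob μ (fun ω => (X ω, Y ω, Z ω)) (a, b, c) = f b c * g a c) :
    condMutualInfo μ X Y Z = 0 := by
  have hXZ : ∀ a c, prob μ (fun ω => (X ω, Z ω)) (a, c) = g a c * ∑ b, f b c := by
    intro a c
    rw [← sum_prob_prod_mid X Y Z, mul_sum]
    simp only [h, mul_comm]
  have hYZ : ∀ b c, prob μ (fun ω => (Y ω, Z ω)) (b, c) = f b c * ∑ a, g a c := by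
    intro b c
    rw [← sum_prob_prod_left X (fun ω => (Y ω, Z ω)), mul_sum]
    exact sum_congr rfl fun a _ => h a b c
  have hZ : ∀ c, prob μ Z c = (∑ a, g a c) * ∑ b, f b c := by
    intro c
    rw [← sum_prob_prod_left X Z, sum_mul]
    simp only [hXZ]
  rw [condMutualInfo_eq_sum hμ]
  refine sum_eq_zero fun ⟨a, b, c⟩ _ => ?_
  rcases (prob_nonneg hμ (fun ω => (X ω, Y ω, Z ω)) (a, b, c)).eq_or_lt with hw | hw
  · simp [← hw]
  · have hc : 0 < prob μ Z c := (prob_marginals_pos hμ X Y Z hw).2.2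
    rw [hZ] at hc
    obtain ⟨hg, hf⟩ := mul_ne_zero_iff.mp hc.ne'
    suffices prob μ (fun ω => (X ω, Y ω, Z ω)) (a, b, c)
        = prob μ (fun ω => (X ω, Z ω)) (a, c) * prob μ (fun ω => (Y ω, Z ω)) (b, c)
          / prob μ Z c by
      rw [← this, sub_self, mul_zero]
    rw [h, hXZ, hYZ, hZ]
    field_simp

lemma mutualInfo_eq_condMutualInfo_const (hμ : ∑ ω, μ ω = 1) (X : Ω → α) (Y : Ω → β) :
    mutualInfo μ X Y = condMutualInfo μ X Y (fun _ => ()) := by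
  have hX : ent μ (fun ω => (X ω, ())) = ent μ X :=
    ent_comp_of_injective (f := fun a => (a, ())) X (Prod.mk_left_injective ())
  have hY : ent μ (fun ω => (Y ω, ())) = ent μ Y :=
    ent_comp_of_injective (f := fun b => (b, ())) Y (Prod.mk_left_injective ())
  have hXY : ent μ (fun ω => (X ω, Y ω, ())) = ent μ (fun ω => (X ω, Y ω)) :=
    ent_comp_of_injective (f := Prod.map id fun b => (b, ())) (fun ω => (X ω, Y ω))
      (injective_id.prodMap (Prod.mk_left_injective ()))
  have hconst : ent μ (fun _ : Ω => ()) = 0 := by simp [ent, prob, hμ]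
  rw [mutualInfo, condMutualInfo, hX, hY, hXY, hconst, sub_zero]

lemma mutualInfo_nonneg (hμ : IsPMF μ) (X : Ω → α) (Y : Ω → β) : 0 ≤ mutualInfo μ X Y := by
  rw [mutualInfo_eq_condMutualInfo_const hμ.2]
  exact condMutualInfo_nonneg hμ.1 X Y _

lemma mutualInfo_eq_zero_of_indep (hμ : IsPMF μ) (X : Ω → α) (Y : Ω → β)
    (h : ∀ a b, prob μ (fun ω => (X ω, Y ω)) (a, b) = prob μ X a * prob μ Y b) :
    mutualInfo μ X Y = 0 := by
  rw [mutualInfo_eq_condMutualInfo_const hμ.2]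
  refine condMutualInfo_eq_zero_of_prob_eq_mul hμ.1 X Y _ (fun b _ => prob μ Y b)
    (fun a _ => prob μ X a) fun a b _ => ?_
  rw [mul_comm, ← h]
  exact prob_comp_of_injective (f := Prod.map id fun b => (b, ())) (fun ω => (X ω, Y ω))
    (injective_id.prodMap (Prod.mk_left_injective ())) (a, b)

lemma mutualInfo_prod_eq_add (X : Ω → α) (Y : Ω → β) (Z : Ω → γ) :
    mutualInfo μ X (fun ω => (Y ω, Z ω)) = mutualInfo μ X Z + condMutualInfo μ X Y Z := by
  rw [mutualInfo, mutualInfo, condMutualInfo]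
  ring

lemma mutualInfo_le_mutualInfo_prod (hμ : ∀ ω, 0 ≤ μ ω) (X : Ω → α) (Y : Ω → β) (Z : Ω → γ) :
    mutualInfo μ X Z ≤ mutualInfo μ X (fun ω => (Y ω, Z ω)) := by
  rw [mutualInfo_prod_eq_add]
  linarith [condMutualInfo_nonneg hμ X Y Z]

lemma mutualInfo_comp_right_of_injective (X : Ω → α) (Y : Ω → β) {f : β → γ}
    (hf : Injective f) : mutualInfo μ X (fun ω => f (Y ω)) = mutualInfo μ X Y := by
  have hXY : ent μ (fun ω => (X ω, f (Y ω))) = ent μ (fun ω => (X ω, Y ω)) :=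
    ent_comp_of_injective (f := Prod.map id f) (fun ω => (X ω, Y ω)) (injective_id.prodMap hf)
  rw [mutualInfo, mutualInfo, ent_comp_of_injective Y hf, hXY]

lemma condMutualInfo_le_condEnt (hμ : ∀ ω, 0 ≤ μ ω) (X : Ω → α) (Y : Ω → β) (Z : Ω → γ) :
    condMutualInfo μ X Y Z ≤ condEnt μ Y Z := by
  have : ent μ (fun ω => (X ω, Z ω)) ≤ ent μ (fun ω => (X ω, Y ω, Z ω)) :=
    ent_comp_le hμ (fun ω => (X ω, Y ω, Z ω)) (fun w => (w.1, w.2.2))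
  rw [condMutualInfo, condEnt]
  linarith

lemma condEnt_le_ent (hμ : IsPMF μ) (X : Ω → α) (Y : Ω → β) : condEnt μ X Y ≤ ent μ X := by
  have := mutualInfo_nonneg hμ X Y
  rw [mutualInfo] at this
  rw [condEnt]
  linarith

end Entropy

section Instrumental

variable {Ω a x y z : Type} [Fintype Ω] [Fintype a] [Fintype x] [Fintype y] [Fintype z]
  [DecidableEq a] [DecidableEq x] [DecidableEq y] [DecidableEq z]
  {μ : Ω → ℝ} {A : Ω → a} {X : Ω → x} {Y : Ω → y} {Z : Ω → z}
  {qY : a → z → y → ℝ} {qZ : a → x → z → ℝ}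

lemma condMutualInfo_eq_zero_of_instrumental (hμ : ∀ ω, 0 ≤ μ ω)
    (hfact : ∀ av xv yv zv, prob μ (fun ω => (A ω, X ω, Y ω, Z ω)) (av, xv, yv, zv)
      = qY av zv yv * qZ av xv zv * prob μ X xv * prob μ A av) :
    condMutualInfo μ X Y (fun ω => (Z ω, A ω)) = 0 := by
  refine condMutualInfo_eq_zero_of_prob_eq_mul hμ X Y _ (fun yv c => qY c.2 c.1 yv)
    (fun xv c => qZ c.2 xv c.1 * prob μ X xv * prob μ A c.2) fun xv yv ⟨zv, av⟩ => ?_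
  have hinj : Injective fun w : a × x × y × z => (w.2.1, w.2.2.1, (w.2.2.2, w.1)) :=
    fun _ _ h => by simp_all [Prod.ext_iff]
  rw [← mul_assoc, ← mul_assoc, ← hfact]
  exact prob_comp_of_injective (fun ω => (A ω, X ω, Y ω, Z ω)) hinj (av, xv, yv, zv)

lemma prob_prod_eq_mul_of_instrumental (hqY : ∀ av zv, ∑ yv, qY av zv yv = 1)
    (hqZ : ∀ av xv, ∑ zv, qZ av xv zv = 1)
    (hfact : ∀ av xv yv zv, prob μ (fun ω => (A ω, X ω, Y ω, Z ω)) (av, xv, yv, zv)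
      = qY av zv yv * qZ av xv zv * prob μ X xv * prob μ A av) (xv : x) (av : a) :
    prob μ (fun ω => (X ω, A ω)) (xv, av) = prob μ X xv * prob μ A av := by
  have hinj : Injective fun w : a × x × y × z => ((w.2.1, w.1), w.2.2) :=
    fun _ _ h => by simp_all [Prod.ext_iff]
  have hJ : ∀ yv zv, prob μ (fun ω => ((X ω, A ω), (Y ω, Z ω))) ((xv, av), (yv, zv))
      = qY av zv yv * qZ av xv zv * prob μ X xv * prob μ A av := fun yv zv => by
    rw [← hfact]
    exact prob_comp_of_injective (fun ω => (A ω, X ω, Y ω, Z ω)) hinj (av, xv, yv, zv)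
  rw [← sum_prob_prod_right _ (fun ω => (Y ω, Z ω)), Fintype.sum_prod_type, sum_comm]
  simp only [hJ, ← sum_mul, hqY, hqZ, one_mul]

end Instrumental

theorem instrumental_observed_inequality_general
    {Ω a x y z : Type} [Fintype Ω] [Fintype a] [Fintype x] [Fintype y] [Fintype z]
    [DecidableEq a] [DecidableEq x] [DecidableEq y] [DecidableEq z]
    (μ : Ω → ℝ) (hμ : IsPMF μ)
    (A : Ω → a) (X : Ω → x) (Y : Ω → y) (Z : Ω → z)
    (qY : a → z → y → ℝ) (qZ : a → x → z → ℝ)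
    (hqY1 : ∀ av zv, ∑ yv, qY av zv yv = 1)
    (hqZ1 : ∀ av xv, ∑ zv, qZ av xv zv = 1)
    (hfact : ∀ (av : a) (xv : x) (yv : y) (zv : z),
      prob μ (fun ω => (A ω, X ω, Y ω, Z ω)) (av, xv, yv, zv)
        = qY av zv yv * qZ av xv zv * prob μ X xv * prob μ A av) :
    mutualInfo μ X (fun ω => (Y ω, Z ω)) ≤ ent μ Z := by
  have hperm : Injective fun w : a × y × z => (w.2.1, w.2.2, w.1) :=
    fun _ _ h => by simp_all [Prod.ext_iff]
  calc mutualInfo μ X (fun ω => (Y ω, Z ω))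
      ≤ mutualInfo μ X (fun ω => (A ω, Y ω, Z ω)) := mutualInfo_le_mutualInfo_prod hμ.1 X A _
    _ = mutualInfo μ X (fun ω => (Y ω, Z ω, A ω)) :=
      (mutualInfo_comp_right_of_injective X (fun ω => (A ω, Y ω, Z ω)) hperm).symm
    _ = mutualInfo μ X (fun ω => (Z ω, A ω)) := by
      rw [mutualInfo_prod_eq_add, condMutualInfo_eq_zero_of_instrumental hμ.1 hfact, add_zero]
    _ = condMutualInfo μ X Z A := by
      rw [mutualInfo_prod_eq_add, mutualInfo_eq_zero_of_indep hμ X A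
        (prob_prod_eq_mul_of_instrumental hqY1 hqZ1 hfact), zero_add]
    _ ≤ condEnt μ Z A := condMutualInfo_le_condEnt hμ.1 X Z A
    _ ≤ ent μ Z := condEnt_le_ent hμ Z A

/-- For the instrumental causal structure,
P(a,x,y,z) = P(y|a,z)·P(z|a,x)·P(x)·P(a), the observed marginal satisfies
I(X:Y,Z) ≤ H(Z). -/
theorem instrumental_observed_inequality
    {Ω a x y z : Type} [Fintype Ω] [Fintype a] [Fintype x] [Fintype y] [Fintype z]
    [DecidableEq a] [DecidableEq x] [DecidableEq y] [DecidableEq z]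
    (μ : Ω → ℝ) (hμ : IsPMF μ)
    (A : Ω → a) (X : Ω → x) (Y : Ω → y) (Z : Ω → z)
    (qY : a → z → y → ℝ) (qZ : a → x → z → ℝ)
    (hqY0 : ∀ av zv yv, 0 ≤ qY av zv yv) (hqY1 : ∀ av zv, ∑ yv, qY av zv yv = 1)
    (hqZ0 : ∀ av xv zv, 0 ≤ qZ av xv zv) (hqZ1 : ∀ av xv, ∑ zv, qZ av xv zv = 1)
    (hfact : ∀ (av : a) (xv : x) (yv : y) (zv : z),
      prob μ (fun ω => (A ω, X ω, Y ω, Z ω)) (av, xv, yv, zv)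
        = qY av zv yv * qZ av xv zv * prob μ X xv * prob μ A av) :
    mutualInfo μ X (fun ω => (Y ω, Z ω)) ≤ ent μ Z :=
  instrumental_observed_inequality_general μ hμ A X Y Z qY qZ hqY1 hqZ1 hfact
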